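/- arXiv:1906.00380 — 2 statements merged into one kernel-verified Lean document; each statement's English description precedes it below -/
import Mathlib

section
/- Let q = r^2 where r is an odd prime power with r ≡ 1 (mod 4). Let s be an even integer with 1 ≤ s ≤ (r+1)/2, let t be an integer with 1 ≤ t ≤ (r−1)/2, and set n = s(r−1) + t(r+1). Then there exists a q-ary [n, n/2] MDS Euclidean self-dual code, i.e., an F_q-subspace C of F_q^n of dimension n/2 with minimum Hamming distance n/2 + 1 satisfying C = C^⊥. -/
open Finset

variable {F : Type*} [Field F]

/-- The Euclidean dual code `C^⊥ = { u : ∀ c ∈ C, ∑ i, u i * c i = 0 }`. -/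
def dualCode {n : ℕ} (C : Submodule F (Fin n → F)) : Submodule F (Fin n → F) where
  carrier := { u | ∀ c ∈ C, ∑ i, u i * c i = 0 }
  add_mem' := by
    intro u w hu hw c hc
    simp only [Set.mem_setOf_eq] at hu hw
    simp [Pi.add_apply, add_mul, Finset.sum_add_distrib, hu c hc, hw c hc]
  zero_mem' := by intro c hc; simp
  smul_mem' := by
    intro r u hu c hc
    simp only [Set.mem_setOf_eq] at hu
    simp [Pi.smul_apply, smul_eq_mul, mul_assoc, ← Finset.mul_sum, hu c hc]

/-- `C` has minimum Hamming distance `d`. -/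
def IsMinDist [DecidableEq F] {n : ℕ} (C : Submodule F (Fin n → F)) (d : ℕ) : Prop :=
  (∀ c ∈ C, c ≠ 0 → d ≤ hammingNorm c) ∧ ∃ c ∈ C, c ≠ 0 ∧ hammingNorm c = d

/-!
A generalized Reed–Solomon code `{(v i * f (a i))ᵢ : deg f < n / 2}` on `n` distinct points is
MDS, and it is self-dual as soon as `v i ^ 2 = N'(a i)⁻¹` with `N = ∏ᵢ (X - a i)`, because
`∑ᵢ N'(a i)⁻¹ g (a i)` is the coefficient of `X ^ (n - 1)` in the interpolant of `g`, which
vanishes for `deg g ≤ n - 2`. So it suffices to find `n` points at which every `N'(a i)` is a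
square of `F = 𝔽_{r²}`.

With `A` a generator of `Fˣ`, take the `s` cosets `A ^ (2i+1) μ_{r-1}` and the `t` cosets
`A ^ (2j) μ_{r+1}`; then `N` is the product of the `X ^ (r-1) - cᵢ` and the `X ^ (r+1) - dⱼ`.
Write `η x = x ^ ((r² - 1) / 2)` for Euler's criterion. Elements of `𝔽_r` are squares, so each
`x ^ (r+1) - dⱼ` is a square; for `u ≠ w` in `μ_{r+1}` the Frobenius gives
`η (u - w) = -(u w) ^ ((r+1)/2)` when `r ≡ 1 mod 4`, so each `x ^ (r-1) - cᵢ` has `η = η x`. The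
derivative of the factor vanishing at `x` also contributes `η x`, hence `η (N'(x)) = (η x) ^ s = 1`
as `s` is even.
-/

open Polynomial

namespace Lagrange

variable {ι : Type*} [DecidableEq ι]

theorem coeff_basis_card_sub_one {s : Finset ι} {v : ι → F} {i : ι} (hi : i ∈ s) :
    (Lagrange.basis s v i).coeff (#s - 1) = nodalWeight s v i := by
  rw [basis_eq_prod_sub_inv_mul_nodal_div hi, ← nodal_erase_eq_nodal_div hi, coeff_C_mul,
    ← card_erase_of_mem hi, ← natDegree_nodal (v := v), nodal_monic.coeff_natDegree, mul_one]

theorem sum_nodalWeight_mul_eval_eq_zero {s : Finset ι} {v : ι → F} (hvs : Set.InjOn v s)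
    {p : F[X]} (hp : p.degree < ↑(#s - 1)) :
    ∑ i ∈ s, nodalWeight s v i * eval (v i) p = 0 := by
  have hps : p.degree < #s := hp.trans_le (by exact_mod_cast Nat.sub_le _ _)
  have h := congrArg (coeff · (#s - 1)) (eq_interpolate hvs hps)
  simp only [interpolate_apply, finsetSum_coeff, coeff_C_mul] at h
  rw [coeff_eq_zero_of_degree_lt hp] at h
  rw [h]
  exact sum_congr rfl fun i hi => by rw [coeff_basis_card_sub_one hi, mul_comm]

end Lagrange

theorem Polynomial.natDegree_lt_of_mem_degreeLT {k : ℕ} {f : F[X]} (hf : f ∈ degreeLT F k)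
    (hf0 : f ≠ 0) : f.natDegree < k :=
  (natDegree_lt_iff_degree_lt hf0).mpr (mem_degreeLT.mp hf)

section GRS

variable {n : ℕ}

noncomputable def grsEncode (a v : Fin n → F) : F[X] →ₗ[F] Fin n → F :=
  LinearMap.pi fun i => v i • leval (a i)

@[simp]
theorem grsEncode_apply (a v : Fin n → F) (f : F[X]) (i : Fin n) :
    grsEncode a v f i = v i * eval (a i) f :=
  rfl

/-- The generalized Reed–Solomon code `GRS_k(a, v)`. -/
noncomputable def grsCode (a v : Fin n → F) (k : ℕ) : Submodule F (Fin n → F) :=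
  (degreeLT F k).map (grsEncode a v)

variable {a v : Fin n → F}

theorem card_le_hammingNorm_grsEncode_add_natDegree [DecidableEq F] (ha : Function.Injective a)
    (hv : ∀ i, v i ≠ 0) {f : F[X]} (hf : f ≠ 0) :
    n ≤ hammingNorm (grsEncode a v f) + f.natDegree := by
  have hzeros : #{i | grsEncode a v f i = 0} ≤ f.natDegree :=
    calc #{i | grsEncode a v f i = 0} ≤ #{i | eval (a i) f = 0} :=
          card_le_card fun i => by simp [hv]
      _ ≤ #f.roots.toFinset :=
          card_le_card_of_injOn a (fun i hi => by simpa [hf] using hi) ha.injOn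
      _ ≤ f.natDegree := (Multiset.toFinset_card_le _).trans (card_roots' f)
  have := card_filter_add_card_filter_not (s := univ) (fun i => grsEncode a v f i ≠ 0)
  simp only [not_not, card_univ, Fintype.card_fin] at this
  unfold hammingNorm
  omega

theorem hammingNorm_grsEncode_nodal [DecidableEq F] (ha : Function.Injective a)
    (hv : ∀ i, v i ≠ 0) (T : Finset (Fin n)) :
    hammingNorm (grsEncode a v (Lagrange.nodal T a)) = n - #T := by
  have : ({i | grsEncode a v (Lagrange.nodal T a) i ≠ 0} : Finset (Fin n)) = Tᶜ := by
    ext i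
    simp [Lagrange.eval_nodal, hv, prod_eq_zero_iff, sub_eq_zero, ha.eq_iff]
  rw [hammingNorm, this, card_compl, Fintype.card_fin]

theorem finrank_grsCode (ha : Function.Injective a) (hv : ∀ i, v i ≠ 0) {k : ℕ} (hk : k ≤ n) :
    Module.finrank F (grsCode a v k) = k := by
  classical
  have hinj : Function.Injective ((grsEncode a v).domRestrict (degreeLT F k)) := by
    rw [← LinearMap.ker_eq_bot, LinearMap.ker_eq_bot']
    rintro ⟨f, hf⟩ h0
    by_contra hne
    have hf0 : f ≠ 0 := fun h => hne (Subtype.ext h)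
    have hweight := card_le_hammingNorm_grsEncode_add_natDegree ha hv hf0
    rw [show grsEncode a v f = 0 from h0, hammingNorm_zero] at hweight
    have := natDegree_lt_of_mem_degreeLT hf hf0
    omega
  rw [grsCode, ← LinearMap.range_domRestrict, LinearMap.finrank_range_of_inj hinj,
    (degreeLTEquiv F k).finrank_eq, Module.finrank_fin_fun]

theorem isMinDist_grsCode [DecidableEq F] (ha : Function.Injective a) (hv : ∀ i, v i ≠ 0)
    {k : ℕ} (hk1 : 1 ≤ k) (hkn : k ≤ n) : IsMinDist (grsCode a v k) (n - k + 1) := by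
  refine ⟨?_, ?_⟩
  · rintro _ ⟨f, hf, rfl⟩ hc
    have hf0 : f ≠ 0 := by rintro rfl; exact hc (map_zero _)
    have := card_le_hammingNorm_grsEncode_add_natDegree ha hv hf0
    have := natDegree_lt_of_mem_degreeLT hf hf0
    omega
  · obtain ⟨T, -, hT⟩ := exists_subset_card_eq (s := (univ : Finset (Fin n))) (n := k - 1)
      (by simp only [card_univ, Fintype.card_fin]; omega)
    have hnorm := hammingNorm_grsEncode_nodal ha hv T
    refine ⟨grsEncode a v (Lagrange.nodal T a), ⟨_, ?_, rfl⟩, ?_, ?_⟩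
    · rw [SetLike.mem_coe, mem_degreeLT, Lagrange.degree_nodal, hT]
      exact_mod_cast (by omega : k - 1 < k)
    · rw [← hammingNorm_ne_zero_iff, hnorm]
      omega
    · rw [hnorm]
      omega

theorem grsCode_le_dualCode (ha : Function.Injective a)
    (hv : ∀ i, Lagrange.nodalWeight univ a i = v i * v i) {k : ℕ} (hk : 2 * k ≤ n) :
    grsCode a v k ≤ dualCode (grsCode a v k) := by
  rintro _ ⟨f, hf, rfl⟩ _ ⟨g, hg, rfl⟩
  have hdeg : (f * g).degree < ↑(#(univ : Finset (Fin n)) - 1) := by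
    rcases eq_or_ne f 0 with rfl | hf0
    · simp
    rcases eq_or_ne g 0 with rfl | hg0
    · simp
    have := natDegree_lt_of_mem_degreeLT hf hf0
    have := natDegree_lt_of_mem_degreeLT hg hg0
    rw [degree_eq_natDegree (mul_ne_zero hf0 hg0), natDegree_mul hf0 hg0, card_univ,
      Fintype.card_fin]
    exact_mod_cast (by omega : _ < n - 1)
  rw [← Lagrange.sum_nodalWeight_mul_eval_eq_zero ha.injOn hdeg]
  exact sum_congr rfl fun i _ => by simp only [grsEncode_apply, hv, eval_mul]; ring

theorem dualCode_eq_orthogonal (C : Submodule F (Fin n → F)) :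
    dualCode C = (Matrix.toBilin' (1 : Matrix (Fin n) (Fin n) F)).orthogonal C := by
  ext u
  simp only [LinearMap.BilinForm.mem_orthogonal_iff, Matrix.toBilin'_apply', Matrix.one_mulVec,
    dotProduct]
  exact forall₂_congr fun c _ => by simp only [mul_comm (c _)]

theorem finrank_dualCode (C : Submodule F (Fin n → F)) :
    Module.finrank F (dualCode C) = n - Module.finrank F C := by
  rw [dualCode_eq_orthogonal, LinearMap.BilinForm.finrank_orthogonal
    (LinearMap.BilinForm.nondegenerate_toBilin'_of_det_ne_zero' _ (by simp)),
    Module.finrank_fin_fun]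

end GRS

theorem exists_isMinDist_eq_dualCode_of_isSquare [DecidableEq F] {n : ℕ} (hn : Even n)
    (hn0 : n ≠ 0) {a : Fin n → F} (ha : Function.Injective a)
    (hsq : ∀ i, IsSquare (eval (a i) (derivative (Lagrange.nodal univ a)))) :
    ∃ C : Submodule F (Fin n → F), Module.finrank F C = n / 2 ∧ IsMinDist C (n / 2 + 1) ∧
      C = dualCode C := by
  have hw (i : Fin n) : IsSquare (Lagrange.nodalWeight univ a i) := by
    rw [Lagrange.nodalWeight_eq_eval_derivative_nodal (mem_univ i)]
    exact (hsq i).inv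
  choose v hv using hw
  have hv0 (i : Fin n) : v i ≠ 0 := fun h =>
    Lagrange.nodalWeight_ne_zero ha.injOn (mem_univ i) (by rw [hv i, h, mul_zero])
  have hk : 2 * (n / 2) = n := Nat.two_mul_div_two_of_even hn
  have hrank := finrank_grsCode ha hv0 (k := n / 2) (by omega)
  refine ⟨grsCode a v (n / 2), hrank, ?_, ?_⟩
  · simpa [show n - n / 2 = n / 2 by omega] using
      isMinDist_grsCode ha hv0 (k := n / 2) (by omega) (by omega)
  · refine Submodule.eq_of_le_of_finrank_le (grsCode_le_dualCode ha hv hk.le) ?_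
    rw [finrank_dualCode, hrank]
    omega

theorem Nat.sq_div_two_eq_of_odd {r : ℕ} (hr : Odd r) : r ^ 2 / 2 = (r - 1) * ((r + 1) / 2) := by
  obtain ⟨m, rfl⟩ := hr
  rw [show 2 * m + 1 - 1 = 2 * m by omega, show (2 * m + 1 + 1) / 2 = m + 1 by omega,
    show (2 * m + 1) ^ 2 = 2 * (2 * m * (m + 1)) + 1 by ring]
  omega

theorem Polynomial.eval_derivative_prod_of_eval_eq_zero {R ι : Type*} [CommRing R]
    [DecidableEq ι] {s : Finset ι} {g : ι → R[X]} {b : ι} (hb : b ∈ s) {x : R}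
    (hx : eval x (g b) = 0) :
    eval x (derivative (∏ c ∈ s, g c)) =
      (∏ c ∈ s.erase b, eval x (g c)) * eval x (derivative (g b)) := by
  rw [derivative_prod_finset, eval_finsetSum, sum_eq_single_of_mem b hb, eval_mul, eval_prod]
  intro c hc hcb
  rw [eval_mul, eval_prod, prod_eq_zero (mem_erase.mpr ⟨Ne.symm hcb, hb⟩) hx, zero_mul]

theorem Polynomial.prod_X_sub_C_mul_pow {R : Type*} [CommRing R] [IsDomain R] {m : ℕ} {ζ : R}
    (hζ : IsPrimitiveRoot ζ m) (hm : 0 < m) (c : R) :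
    ∏ k : Fin m, (X - C (c * ζ ^ (k : ℕ))) = X ^ m - C (c ^ m) := by
  rw [X_pow_sub_C_eq_prod hζ hm rfl, Fin.prod_univ_eq_prod_range (fun k => X - C (c * ζ ^ k))]
  simp only [mul_comm c]

theorem IsPrimitiveRoot.eq_and_eq_of_pow_mul_pow_eq {M : Type*} [CommMonoid M] {A : M}
    {m n e e' k k' : ℕ} (hA : IsPrimitiveRoot A (n * m)) (he : e < n) (he' : e' < n)
    (hk : k < m) (hk' : k' < m) (h : A ^ e * (A ^ n) ^ k = A ^ e' * (A ^ n) ^ k') :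
    e = e' ∧ k = k' := by
  have hlt {e k : ℕ} (he : e < n) (hk : k < m) : e + n * k < n * m :=
    calc e + n * k < n * (k + 1) := by rw [mul_add_one]; omega
      _ ≤ n * m := Nat.mul_le_mul_left n hk
  rw [← pow_mul, ← pow_add, ← pow_mul, ← pow_add] at h
  have h' := hA.pow_inj (hlt he hk) (hlt he' hk') h
  have hmod := congrArg (· % n) h'
  have hdiv := congrArg (· / n) h'
  have hn : 0 < n := by omega
  simp only [Nat.add_mul_mod_self_left, Nat.mod_eq_of_lt he, Nat.mod_eq_of_lt he'] at hmod
  simp only [Nat.add_mul_div_left _ _ hn, Nat.div_eq_of_lt he, Nat.div_eq_of_lt he', zero_add]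
    at hdiv
  exact ⟨hmod, hdiv⟩

theorem FiniteField.exists_isPrimitiveRoot_card_sub_one (K : Type*) [Field K] [Fintype K] :
    ∃ A : K, IsPrimitiveRoot A (Fintype.card K - 1) := by
  classical
  obtain ⟨g, hg⟩ := IsCyclic.exists_ofOrder_eq_natCard (α := Kˣ)
  refine ⟨g, ?_⟩
  rw [← Fintype.card_units, ← Nat.card_eq_fintype_card, ← hg, ← orderOf_units]
  exact IsPrimitiveRoot.orderOf _

section FiniteField

variable [Fintype F] {r : ℕ}

theorem sub_pow_of_card_eq_sq (hr : IsPrimePow r) (hcard : Fintype.card F = r ^ 2) (x y : F) :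
    (x - y) ^ r = x ^ r - y ^ r := by
  obtain ⟨p, m, hp, -, rfl⟩ := hr
  have : Fact p.Prime := ⟨hp.nat_prime⟩
  have : CharP F p := charP_of_card_eq_prime_pow (f := m * 2) (by rw [hcard, ← pow_mul])
  exact sub_pow_char_pow x y m

theorem natCast_eq_zero_of_card_eq_sq (hcard : Fintype.card F = r ^ 2) : (r : F) = 0 := by
  have := FiniteField.cast_card_eq_zero F
  rw [hcard, Nat.cast_pow] at this
  exact pow_eq_zero_iff two_ne_zero |>.mp this

theorem ringChar_ne_two_of_card_eq_sq (hcard : Fintype.card F = r ^ 2) (hr : Odd r) :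
    ringChar F ≠ 2 := by
  rw [Ne, FiniteField.even_card_iff_char_two, hcard, ← Nat.even_iff]
  exact Nat.not_even_iff_odd.mpr hr.pow

theorem pow_card_div_two_eq_one_of_pow_eq_self (hcard : Fintype.card F = r ^ 2) (hr : Odd r)
    {d : F} (hd0 : d ≠ 0) (hd : d ^ r = d) : d ^ (Fintype.card F / 2) = 1 := by
  have hd1 : d ^ (r - 1) = 1 :=
    mul_right_cancel₀ hd0 (by rw [← pow_succ, Nat.sub_add_cancel hr.pos, hd, one_mul])
  rw [hcard, Nat.sq_div_two_eq_of_odd hr, pow_mul, hd1, one_pow]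

/-- Since `u ^ r = u⁻¹`, the Frobenius gives `(u - w) ^ (r - 1) = -(u * w)⁻¹`; and `(r + 1) / 2` is
odd. -/
theorem sub_pow_card_div_two_of_pow_succ_eq_one (hr : IsPrimePow r)
    (hcard : Fintype.card F = r ^ 2) (hr1 : r % 4 = 1) {u w : F} (hu : u ^ (r + 1) = 1)
    (hw : w ^ (r + 1) = 1) (huw : u ≠ w) :
    (u - w) ^ (Fintype.card F / 2) = -(u * w) ^ ((r + 1) / 2) := by
  have hodd : Odd r := Nat.odd_iff.mpr (by omega)
  have hur : u ^ r = u⁻¹ := eq_inv_of_mul_eq_one_left (by rw [← pow_succ, hu])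
  have hwr : w ^ r = w⁻¹ := eq_inv_of_mul_eq_one_left (by rw [← pow_succ, hw])
  have hu0 : u ≠ 0 := by rintro rfl; simp at hu
  have hw0 : w ≠ 0 := by rintro rfl; simp at hw
  have hd0 : u - w ≠ 0 := sub_ne_zero.mpr huw
  have hd : (u - w) ^ (r - 1) = -(u * w)⁻¹ := by
    refine mul_right_cancel₀ hd0 ?_
    rw [← pow_succ, Nat.sub_add_cancel hodd.pos, sub_pow_of_card_eq_sq hr hcard, hur, hwr]
    field_simp
    ring
  have hm : Odd ((r + 1) / 2) := Nat.odd_iff.mpr (by omega)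
  have hsq : ((u * w) ^ ((r + 1) / 2)) ^ 2 = 1 := by
    rw [← pow_mul, Nat.div_mul_cancel (by omega : 2 ∣ r + 1), mul_pow, hu, hw, one_mul]
  rw [hcard, Nat.sq_div_two_eq_of_odd hodd, pow_mul, hd, hm.neg_pow, inv_pow, neg_inj]
  exact inv_eq_of_mul_eq_one_left (by rw [← sq, hsq])

theorem sub_pow_pred_pow_card_div_two (hr : IsPrimePow r) (hcard : Fintype.card F = r ^ 2)
    (hr1 : r % 4 = 1) {x y : F} (hx : x ≠ 0) (hy : y ≠ 0) (hxy : x ^ (r - 1) ≠ y ^ (r - 1)) :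
    (x ^ (r - 1) - y ^ (r - 1)) ^ (Fintype.card F / 2) =
      -(x ^ (Fintype.card F / 2) * y ^ (Fintype.card F / 2)) := by
  have hodd : Odd r := Nat.odd_iff.mpr (by omega)
  have hroot {z : F} (hz : z ≠ 0) : (z ^ (r - 1)) ^ (r + 1) = 1 := by
    rw [← pow_mul, mul_comm, ← mul_self_tsub_one, ← sq, ← hcard,
      FiniteField.pow_card_sub_one_eq_one z hz]
  rw [sub_pow_card_div_two_of_pow_succ_eq_one hr hcard hr1 (hroot hx) (hroot hy) hxy, ← mul_pow,
    ← pow_mul, ← mul_pow, hcard, Nat.sq_div_two_eq_of_odd hodd]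

theorem sub_pow_succ_pow_card_div_two (hr : IsPrimePow r) (hcard : Fintype.card F = r ^ 2)
    (hodd : Odd r) {x y : F} (hxy : x ^ (r + 1) ≠ y ^ (r + 1)) :
    (x ^ (r + 1) - y ^ (r + 1)) ^ (Fintype.card F / 2) = 1 := by
  have hfix (z : F) : (z ^ (r + 1)) ^ r = z ^ (r + 1) := by
    rw [← pow_mul, show (r + 1) * r = r ^ 2 + r by ring, pow_add, ← hcard, FiniteField.pow_card,
      ← pow_succ']
  refine pow_card_div_two_eq_one_of_pow_eq_self hcard hodd (sub_ne_zero.mpr hxy) ?_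
  rw [sub_pow_of_card_eq_sq hr hcard, hfix, hfix]

theorem IsPrimitiveRoot.pow_card_div_two_eq_neg_one {A : F}
    (hA : IsPrimitiveRoot A (Fintype.card F - 1)) (hF : ringChar F ≠ 2) :
    A ^ (Fintype.card F / 2) = -1 := by
  have hodd := FiniteField.odd_card_of_char_ne_two hF
  have h2 : 1 < Fintype.card F := Fintype.one_lt_card
  refine (FiniteField.pow_dichotomy hF (hA.ne_zero (by omega))).resolve_left ?_
  exact hA.pow_ne_one_of_pos_of_lt (by omega) (by omega)

theorem pow_card_div_two_pow_of_odd (hF : ringChar F ≠ 2) {x : F} (hx : x ≠ 0) {m : ℕ}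
    (hm : Odd m) : (x ^ (Fintype.card F / 2)) ^ m = x ^ (Fintype.card F / 2) := by
  rcases FiniteField.pow_dichotomy hF hx with h | h <;> rw [h]
  · exact one_pow m
  · exact hm.neg_one_pow

end FiniteField

section Blocks

variable {A : F} {r s t : ℕ}

variable (A r s t) in
/-- When `A` generates `Fˣ`, `A ^ (r + 1)` generates `μ_{r-1}` and `A ^ (r - 1)` generates
`μ_{r+1}`. -/
def blockPoint : (Fin s × Fin (r - 1)) ⊕ (Fin t × Fin (r + 1)) → F
  | .inl (i, k) => A ^ (2 * (i : ℕ) + 1) * (A ^ (r + 1)) ^ (k : ℕ)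
  | .inr (j, l) => A ^ (2 * (j : ℕ)) * (A ^ (r - 1)) ^ (l : ℕ)

variable (A r) in
noncomputable def blockPoly : Fin s ⊕ Fin t → F[X]
  | .inl i => X ^ (r - 1) - C ((A ^ (2 * (i : ℕ) + 1)) ^ (r - 1))
  | .inr j => X ^ (r + 1) - C ((A ^ (2 * (j : ℕ))) ^ (r + 1))

theorem nodal_blockPoint (hA : IsPrimitiveRoot A ((r - 1) * (r + 1))) (hr : 1 < r) :
    Lagrange.nodal univ (blockPoint A r s t) = ∏ b : Fin s ⊕ Fin t, blockPoly A r b := by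
  have hpos : 0 < (r - 1) * (r + 1) := Nat.mul_pos (by omega) (by omega)
  have hβ : IsPrimitiveRoot (A ^ (r + 1)) (r - 1) := hA.pow hpos (mul_comm _ _)
  have hγ : IsPrimitiveRoot (A ^ (r - 1)) (r + 1) := hA.pow hpos rfl
  simp only [Lagrange.nodal, Fintype.prod_sum_type, Fintype.prod_prod_type, blockPoint, blockPoly,
    prod_X_sub_C_mul_pow hβ (by omega), prod_X_sub_C_mul_pow hγ (by omega)]

theorem eval_blockPoly_blockPoint (hA : IsPrimitiveRoot A ((r - 1) * (r + 1)))
    (z : (Fin s × Fin (r - 1)) ⊕ (Fin t × Fin (r + 1))) :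
    eval (blockPoint A r s t z) (blockPoly A r (Sum.map Prod.fst Prod.fst z)) = 0 := by
  have hβ : (A ^ (r + 1)) ^ (r - 1) = 1 := by rw [← pow_mul, mul_comm, hA.pow_eq_one]
  have hγ : (A ^ (r - 1)) ^ (r + 1) = 1 := by rw [← pow_mul, hA.pow_eq_one]
  rcases z with ⟨i, k⟩ | ⟨j, l⟩
  · rw [blockPoint, Sum.map_inl, blockPoly, eval_sub, eval_pow, eval_X, eval_C, mul_pow,
      pow_right_comm _ (k : ℕ), hβ, one_pow, mul_one, sub_self]
  · rw [blockPoint, Sum.map_inr, blockPoly, eval_sub, eval_pow, eval_X, eval_C, mul_pow,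
      pow_right_comm _ (l : ℕ), hγ, one_pow, mul_one, sub_self]

theorem pow_pow_card_div_two [Fintype F] (hAe : A ^ (Fintype.card F / 2) = -1) (m : ℕ) :
    (A ^ m) ^ (Fintype.card F / 2) = (-1) ^ m := by
  rw [pow_right_comm, hAe]

theorem blockPoint_inl_pow_card_div_two [Fintype F] (hAe : A ^ (Fintype.card F / 2) = -1)
    (hr : Odd r)     (i : Fin s) (k : Fin (r - 1)) :
    blockPoint A r s t (.inl (i, k)) ^ (Fintype.card F / 2) = -1 := by
  rw [blockPoint, mul_pow, pow_right_comm _ (k : ℕ), pow_pow_card_div_two hAe,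
    pow_pow_card_div_two hAe, hr.add_one.neg_one_pow, one_pow, mul_one,
    Odd.neg_one_pow ⟨i, rfl⟩]

theorem blockPoint_inr_pow_card_div_two [Fintype F] (hAe : A ^ (Fintype.card F / 2) = -1)
    (hr : Odd r)     (j : Fin t) (l : Fin (r + 1)) :
    blockPoint A r s t (.inr (j, l)) ^ (Fintype.card F / 2) = 1 := by
  rw [blockPoint, mul_pow, pow_right_comm _ (l : ℕ), pow_pow_card_div_two hAe,
    pow_pow_card_div_two hAe, (Nat.Odd.sub_odd hr odd_one).neg_one_pow, one_pow, mul_one,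
    Even.neg_one_pow ⟨j, two_mul _⟩]

theorem blockPoint_injective [Fintype F] (hA : IsPrimitiveRoot A ((r - 1) * (r + 1)))
    (hAe : A ^ (Fintype.card F / 2) = -1) (hF : ringChar F ≠ 2) (hr : Odd r)
    (hs : 2 * s ≤ r + 1) (ht : 2 * t ≤ r - 1) :
    Function.Injective (blockPoint A r s t) := by
  have hA' : IsPrimitiveRoot A ((r + 1) * (r - 1)) := mul_comm (r - 1) (r + 1) ▸ hA
  rintro (⟨i, k⟩ | ⟨j, l⟩) (⟨i', k'⟩ | ⟨j', l'⟩) h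
  · obtain ⟨hi, hk⟩ := hA'.eq_and_eq_of_pow_mul_pow_eq (by omega) (by omega) k.isLt k'.isLt h
    rw [Fin.ext (by omega : (i : ℕ) = i'), Fin.ext hk]
  · have := blockPoint_inl_pow_card_div_two (t := t) hAe hr i k
    rw [h, blockPoint_inr_pow_card_div_two hAe hr] at this
    exact absurd this.symm (Ring.neg_one_ne_one_of_char_ne_two hF)
  · have := blockPoint_inl_pow_card_div_two (t := t) hAe hr i' k'
    rw [← h, blockPoint_inr_pow_card_div_two hAe hr] at this
    exact absurd this.symm (Ring.neg_one_ne_one_of_char_ne_two hF)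
  · obtain ⟨hj, hl⟩ := hA.eq_and_eq_of_pow_mul_pow_eq (by omega) (by omega) l.isLt l'.isLt h
    rw [Fin.ext (by omega : (j : ℕ) = j'), Fin.ext hl]

theorem pow_card_div_two_eval_blockPoly [Fintype F] (hr : IsPrimePow r)
    (hcard : Fintype.card F = r ^ 2) (hr1 : r % 4 = 1) (hA0 : A ≠ 0)
    (hAe : A ^ (Fintype.card F / 2) = -1) {x : F} (hx : x ≠ 0) (b : Fin s ⊕ Fin t)
    (hb : eval x (blockPoly A r b) ≠ 0) :
    eval x (blockPoly A r b) ^ (Fintype.card F / 2) =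
      Sum.elim (fun _ => x ^ (Fintype.card F / 2)) (fun _ => 1) b := by
  rcases b with i | j
  · simp only [blockPoly, eval_sub, eval_pow, eval_X, eval_C, Sum.elim_inl] at hb ⊢
    rw [sub_pow_pred_pow_card_div_two hr hcard hr1 hx (pow_ne_zero _ hA0) (sub_ne_zero.mp hb),
      pow_pow_card_div_two hAe, Odd.neg_one_pow ⟨i, rfl⟩, mul_neg_one, neg_neg]
  · simp only [blockPoly, eval_sub, eval_pow, eval_X, eval_C, Sum.elim_inr] at hb ⊢
    exact sub_pow_succ_pow_card_div_two hr hcard (Nat.odd_iff.mpr (by omega)) (sub_ne_zero.mp hb)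

theorem pow_card_div_two_eval_derivative_blockPoly [Fintype F] (hcard : Fintype.card F = r ^ 2)
    (hr : Odd r) (h1r : 1 < r) {x : F} (hx : x ≠ 0) (b : Fin s ⊕ Fin t) :
    eval x (derivative (blockPoly A r b)) ^ (Fintype.card F / 2) = x ^ (Fintype.card F / 2) := by
  have hF := ringChar_ne_two_of_card_eq_sq hcard hr
  have hr0 := natCast_eq_zero_of_card_eq_sq hcard
  rcases b with i | j
  · have hcast : ((r - 1 : ℕ) : F) = -1 := by rw [Nat.cast_sub hr.pos, hr0, Nat.cast_one, zero_sub]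
    have heven : Even (Fintype.card F / 2) := by
      rw [hcard, Nat.sq_div_two_eq_of_odd hr]
      exact (Nat.Odd.sub_odd hr odd_one).mul_right _
    simp only [blockPoly, derivative_sub, derivative_X_pow, derivative_C, sub_zero, eval_mul,
      eval_C, eval_pow, eval_X, hcast]
    rw [mul_pow, heven.neg_one_pow, one_mul, pow_right_comm,
      pow_card_div_two_pow_of_odd hF hx
        (Nat.Even.sub_odd (by omega) (Nat.Odd.sub_odd hr odd_one) odd_one)]
  · have hcast : ((r + 1 : ℕ) : F) = 1 := by rw [Nat.cast_succ, hr0, zero_add]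
    simp only [blockPoly, derivative_sub, derivative_X_pow, derivative_C, sub_zero, eval_mul,
      eval_C, eval_pow, eval_X, hcast, one_mul, Nat.add_sub_cancel]
    rw [pow_right_comm, pow_card_div_two_pow_of_odd hF hx hr]

theorem isSquare_eval_derivative_nodal_blockPoint [Fintype F] (hr : IsPrimePow r)
    (hcard : Fintype.card F = r ^ 2) (hr1 : r % 4 = 1) (hA : IsPrimitiveRoot A ((r - 1) * (r + 1)))
    (hAe : A ^ (Fintype.card F / 2) = -1) (hs : 2 * s ≤ r + 1) (ht : 2 * t ≤ r - 1)
    (hse : Even s) (z : (Fin s × Fin (r - 1)) ⊕ (Fin t × Fin (r + 1))) :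
    IsSquare
      (eval (blockPoint A r s t z) (derivative (Lagrange.nodal univ (blockPoint A r s t)))) := by
  have hodd : Odd r := Nat.odd_iff.mpr (by omega)
  have h1r : 1 < r := hr.one_lt
  have hF := ringChar_ne_two_of_card_eq_sq hcard hodd
  have hA0 : A ≠ 0 := hA.ne_zero (Nat.mul_pos (by omega) (by omega)).ne'
  set x := blockPoint A r s t z
  set b₀ := Sum.map Prod.fst Prod.fst z
  have hN : eval x (derivative (Lagrange.nodal univ (blockPoint A r s t))) =
      (∏ b ∈ univ.erase b₀, eval x (blockPoly A r b)) * eval x (derivative (blockPoly A r b₀)) := by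
    rw [nodal_blockPoint hA h1r,
      eval_derivative_prod_of_eval_eq_zero (mem_univ b₀) (eval_blockPoly_blockPoint hA z)]
  have hN0 : eval x (derivative (Lagrange.nodal univ (blockPoint A r s t))) ≠ 0 := by
    rw [Lagrange.eval_nodal_derivative_eval_node_eq (mem_univ z), Lagrange.eval_nodal]
    exact prod_ne_zero_iff.mpr fun z' hz' => sub_ne_zero.mpr
      ((blockPoint_injective hA hAe hF hodd hs ht).ne (ne_of_mem_erase hz').symm)
  have hfactors := prod_ne_zero_iff.mp (left_ne_zero_of_mul (hN ▸ hN0))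
  have hx0 : x ≠ 0 := by rcases z with ⟨i, k⟩ | ⟨j, l⟩ <;> simp [x, blockPoint, hA0]
  have hder : eval x (derivative (blockPoly A r b₀)) ^ (Fintype.card F / 2) =
      Sum.elim (fun _ => x ^ (Fintype.card F / 2)) (fun _ => 1) b₀ := by
    rw [pow_card_div_two_eval_derivative_blockPoly hcard hodd h1r hx0]
    rcases z with ⟨i, k⟩ | ⟨j, l⟩
    · rfl
    · exact blockPoint_inr_pow_card_div_two hAe hodd j l
  refine (FiniteField.isSquare_iff hF hN0).mpr ?_
  rw [hN, mul_pow, ← prod_pow, prod_congr rfl fun b hb =>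
      pow_card_div_two_eval_blockPoly hr hcard hr1 hA0 hAe hx0 b (hfactors b hb),
    hder, prod_erase_mul _ _ (mem_univ b₀), Fintype.prod_sum_type]
  simp only [Sum.elim_inl, Sum.elim_inr, prod_const, card_univ, Fintype.card_fin, one_pow,
    mul_one]
  rcases FiniteField.pow_dichotomy hF hx0 with h | h <;> rw [h]
  · exact one_pow s
  · exact hse.neg_one_pow

theorem exists_injective_isSquare_eval_derivative_nodal [Fintype F] (hr : IsPrimePow r)
    (hcard : Fintype.card F = r ^ 2) (hr1 : r % 4 = 1) (hs : 2 * s ≤ r + 1) (ht : 2 * t ≤ r - 1)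
    (hse : Even s) :
    ∃ a : Fin (s * (r - 1) + t * (r + 1)) → F, Function.Injective a ∧
      ∀ i, IsSquare (eval (a i) (derivative (Lagrange.nodal univ a))) := by
  have hodd : Odd r := Nat.odd_iff.mpr (by omega)
  have hF := ringChar_ne_two_of_card_eq_sq hcard hodd
  obtain ⟨A, hA⟩ := FiniteField.exists_isPrimitiveRoot_card_sub_one F
  have hAe := hA.pow_card_div_two_eq_neg_one hF
  rw [hcard, sq, mul_self_tsub_one, mul_comm] at hA
  let e : Fin (s * (r - 1) + t * (r + 1)) ≃ (Fin s × Fin (r - 1)) ⊕ (Fin t × Fin (r + 1)) :=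
    (Fintype.equivFinOfCardEq (by simp)).symm
  refine ⟨blockPoint A r s t ∘ e, (blockPoint_injective hA hAe hF hodd hs ht).comp e.injective,
    fun i => ?_⟩
  have hnodal : Lagrange.nodal univ (blockPoint A r s t ∘ e) =
      Lagrange.nodal univ (blockPoint A r s t) :=
    e.prod_comp fun z => X - C (blockPoint A r s t z)
  rw [hnodal]
  exact isSquare_eval_derivative_nodal_blockPoint hr hcard hr1 hA hAe hs ht hse (e i)

end Blocks

theorem exists_MDS_selfDual_r1mod4_general (F : Type*) [Field F] [Fintype F] [DecidableEq F]
    (r : ℕ) (hr : IsPrimePow r) (hr1 : r % 4 = 1)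
    (hcard : Fintype.card F = r ^ 2)
    (s t : ℕ) (hs2 : s ≤ (r + 1) / 2) (hse : Even s)
    (ht1 : 1 ≤ t) (ht2 : t ≤ (r - 1) / 2) :
    ∃ C : Submodule F (Fin (s * (r - 1) + t * (r + 1)) → F),
      Module.finrank F C = (s * (r - 1) + t * (r + 1)) / 2 ∧
      IsMinDist C ((s * (r - 1) + t * (r + 1)) / 2 + 1) ∧
      C = dualCode C := by
  obtain ⟨a, ha, hsq⟩ :=
    exists_injective_isSquare_eval_derivative_nodal (s := s) (t := t) hr hcard hr1 (by omega)
      (by omega) hse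
  have hodd : Odd r := Nat.odd_iff.mpr (by omega)
  have hn : Even (s * (r - 1) + t * (r + 1)) :=
    (hse.mul_right _).add (hodd.add_one.mul_left _)
  have hn0 : s * (r - 1) + t * (r + 1) ≠ 0 := by
    have := Nat.mul_pos ht1 (by omega : 0 < r + 1)
    omega
  exact exists_isMinDist_eq_dualCode_of_isSquare hn hn0 ha hsq

/-- Theorem 1(i).  Let `q = r²` with `r` an odd prime power,
`r ≡ 1 (mod 4)`.  Let `s` be even with `1 ≤ s ≤ (r+1)/2`, let `1 ≤ t ≤ (r-1)/2`, and set
`n = s(r-1) + t(r+1)`.  Then there exists a `q`-ary `[n, n/2]` MDS Euclidean self-dual code: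
a subspace `C ⊆ F^n` of dimension `n/2` with minimum Hamming distance `n/2 + 1` and
`C = C^⊥`. -/
theorem exists_MDS_selfDual_r1mod4 (F : Type*) [Field F] [Fintype F] [DecidableEq F]
    (r : ℕ) (hr : IsPrimePow r) (hrodd : Odd r) (hr1 : r % 4 = 1)
    (hcard : Fintype.card F = r ^ 2)
    (s t : ℕ) (hs1 : 1 ≤ s) (hs2 : s ≤ (r + 1) / 2) (hse : Even s)
    (ht1 : 1 ≤ t) (ht2 : t ≤ (r - 1) / 2) :
    ∃ C : Submodule F (Fin (s * (r - 1) + t * (r + 1)) → F),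
      Module.finrank F C = (s * (r - 1) + t * (r + 1)) / 2 ∧
      IsMinDist C ((s * (r - 1) + t * (r + 1)) / 2 + 1) ∧
      C = dualCode C :=
  exists_MDS_selfDual_r1mod4_general F r hr hr1 hcard s t hs2 hse ht1 ht2
end

section
/- Let q = r^2 where r is an odd prime power, let g be a primitive element of F_q^*, and set β = g^{r−1}. Let s ≥ 1 and j ≥ 0 be integers. Define u = ∏_{h=0}^{s−1} (β^{−2j} + β^{−2h}) ∈ F_q. Then u^r = β^{2(sj + s(s−1)/2)} · u. -/
/-!
Since `r` is a power of the characteristic, `x ↦ x ^ r` is additive, and since `β` has order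
dividing `r + 1`, it sends `β ^ m` to `β ^ (-m)`. Hence each factor `β ^ a + β ^ b` of `u` is
mapped to `β ^ (-a) + β ^ (-b) = β ^ (-(a + b)) * (β ^ a + β ^ b)`, and multiplying over the
factors gives `u ^ r = β ^ e * u` with `e = ∑ₕ (2j + 2h) = 2sj + s(s - 1)`.
-/

open Finset

theorem zpow_sum₀ {G ι : Type*} [CommGroupWithZero G] {b : G} (hb : b ≠ 0) (s : Finset ι)
    (f : ι → ℤ) : b ^ (∑ i ∈ s, f i) = ∏ i ∈ s, b ^ f i := by
  classical
  induction s using Finset.induction with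
  | empty => simp
  | insert i s hi ih => rw [sum_insert hi, prod_insert hi, zpow_add₀ hb, ih]

theorem sum_range_two_mul_natCast (s : ℕ) :
    ∑ h ∈ range s, 2 * (h : ℤ) = s * (s - 1) := by
  induction s with
  | zero => simp
  | succ s ih => rw [sum_range_succ, ih]; push_cast; ring

theorem add_pow_of_isPrimePow {R : Type*} [CommRing R] (p : ℕ) [hp : Fact p.Prime] [CharP R p]
    {r : ℕ} (hr : IsPrimePow r) (hpr : p ∣ r) (x y : R) : (x + y) ^ r = x ^ r + y ^ r := by
  obtain ⟨q, k, hq, hk, rfl⟩ := (isPrimePow_nat_iff r).mp hr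
  obtain rfl : p = q := (Nat.prime_dvd_prime_iff_eq hp.out hq).mp (hp.out.dvd_of_dvd_pow hpr)
  exact add_pow_char_pow ..

theorem FiniteField.add_pow_of_card_eq_pow {F : Type*} [Field F] [Fintype F] {r n : ℕ}
    (hr : IsPrimePow r) (hn : n ≠ 0) (hcard : Fintype.card F = r ^ n) (x y : F) :
    (x + y) ^ r = x ^ r + y ^ r := by
  obtain ⟨p, hp⟩ := CharP.exists F
  have : Fact p.Prime := ⟨CharP.char_is_prime F p⟩
  have hr0 : (r : F) = 0 := by
    have := FiniteField.cast_card_eq_zero F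
    rw [hcard, Nat.cast_pow] at this
    exact pow_eq_zero_iff hn |>.mp this
  exact add_pow_of_isPrimePow p hr ((CharP.cast_eq_zero_iff F p r).mp hr0) x y

theorem zpow_pow_of_pow_succ_eq_one {G : Type*} [GroupWithZero G] {b : G} {r : ℕ}
    (hb : b ^ (r + 1) = 1) (m : ℤ) : (b ^ m) ^ r = b ^ (-m) := by
  have hb0 : b ≠ 0 := by rintro rfl; simp at hb
  have hb' : b ^ ((r : ℤ) + 1) = 1 := by exact_mod_cast hb
  calc (b ^ m) ^ r = b ^ (-m + ((r : ℤ) + 1) * m) := by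
        rw [← zpow_natCast, ← zpow_mul]; congr 1; ring
    _ = b ^ (-m) := by rw [zpow_add₀ hb0, zpow_mul, hb', one_zpow, mul_one]

theorem pow_prod_zpow_add_zpow {F ι : Type*} [Semifield F] {r : ℕ}
    (hfrob : ∀ x y : F, (x + y) ^ r = x ^ r + y ^ r) {b : F} (hb : b ^ (r + 1) = 1)
    (s : Finset ι) (m n : ι → ℤ) :
    (∏ i ∈ s, (b ^ m i + b ^ n i)) ^ r =
      b ^ (-∑ i ∈ s, (m i + n i)) * ∏ i ∈ s, (b ^ m i + b ^ n i) := by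
  have hb0 : b ≠ 0 := by rintro rfl; simp at hb
  rw [← prod_pow, ← sum_neg_distrib, zpow_sum₀ hb0, ← prod_mul_distrib]
  refine prod_congr rfl fun i _ => ?_
  rw [hfrob, zpow_pow_of_pow_succ_eq_one hb, zpow_pow_of_pow_succ_eq_one hb, mul_add,
    ← zpow_add₀ hb0, ← zpow_add₀ hb0]
  ring_nf

theorem pow_sub_one_pow_add_one_eq_one {M : Type*} [Monoid M] {g : M} {r : ℕ}
    (hg : g ^ (r ^ 2 - 1) = 1) : (g ^ (r - 1)) ^ (r + 1) = 1 := by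
  rwa [← pow_mul, mul_comm, ← mul_self_tsub_one, ← sq]

theorem pow_r_of_prod_zpow_add_general (F : Type*) [Field F] [Fintype F]
    (r : ℕ) (hr : IsPrimePow r) (hcard : Fintype.card F = r ^ 2)
    (g : F) (hg : orderOf g = Fintype.card F - 1)
    (s : ℕ) (j : ℕ) :
    (∏ h ∈ Finset.range s,
        ((g ^ (r - 1)) ^ (-2 * (j : ℤ)) + (g ^ (r - 1)) ^ (-2 * (h : ℤ)))) ^ r =
      (g ^ (r - 1)) ^ (2 * (s : ℤ) * (j : ℤ) + (s : ℤ) * ((s : ℤ) - 1)) *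
        ∏ h ∈ Finset.range s,
          ((g ^ (r - 1)) ^ (-2 * (j : ℤ)) + (g ^ (r - 1)) ^ (-2 * (h : ℤ))) := by
  have hβ : (g ^ (r - 1)) ^ (r + 1) = 1 :=
    pow_sub_one_pow_add_one_eq_one (by rw [← hcard, ← hg, pow_orderOf_eq_one])
  rw [pow_prod_zpow_add_zpow (FiniteField.add_pow_of_card_eq_pow hr two_ne_zero hcard) hβ]
  congr 2
  simp only [neg_mul, sum_add_distrib, sum_neg_distrib, sum_const, card_range, nsmul_eq_mul,
    sum_range_two_mul_natCast]
  ring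

/-- Let `q = r²` with `r` an odd prime power, `g` a primitive element of
`F^*`, and `β = g^{r-1}`.  For integers `s ≥ 1` and `j ≥ 0`, the element
`u = ∏_{h=0}^{s-1} (β^{-2j} + β^{-2h})` satisfies `u^r = β^{2(sj + s(s-1)/2)} · u`.
(The exponent `2(sj + s(s-1)/2) = 2sj + s(s-1)` is taken as an integer.) -/
theorem pow_r_of_prod_zpow_add (F : Type*) [Field F] [Fintype F]
    (r : ℕ) (hr : IsPrimePow r) (hrodd : Odd r) (hcard : Fintype.card F = r ^ 2)
    (g : F) (hg : orderOf g = Fintype.card F - 1)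
    (s : ℕ) (hs : 1 ≤ s) (j : ℕ) :
    (∏ h ∈ Finset.range s,
        ((g ^ (r - 1)) ^ (-2 * (j : ℤ)) + (g ^ (r - 1)) ^ (-2 * (h : ℤ)))) ^ r =
      (g ^ (r - 1)) ^ (2 * (s : ℤ) * (j : ℤ) + (s : ℤ) * ((s : ℤ) - 1)) *
        ∏ h ∈ Finset.range s,
          ((g ^ (r - 1)) ^ (-2 * (j : ℤ)) + (g ^ (r - 1)) ^ (-2 * (h : ℤ))) :=
  pow_r_of_prod_zpow_add_general F r hr hcard g hg s j
end
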